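/- arXiv:0804.4663 — 4 statements merged into one kernel-verified Lean document; each statement's English description precedes it below -/
import Mathlib

section
/- Let G be a finite group and a, b, c non-identity elements with abc = 1 whose generated cyclic subgroups A = ⟨a⟩, B = ⟨b⟩, C = ⟨c⟩ pairwise intersect trivially. Define T∘ = {(gA, gB, gC) : g ∈ G} and T⋆ = {(gA, gB, g a⁻¹ C) : g ∈ G}. Then T∘ and T⋆ are disjoint: no triple (gA, gB, gC) equals a triple (hA, hB, h a⁻¹ C). -/
namespace QuotientGroup

variable {G : Type*} [Group G]

theorem eq_of_mk_eq_of_inf_eq_bot {H K : Subgroup G} (hHK : H ⊓ K = ⊥) {g h : G}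
    (hH : (g : G ⧸ H) = h) (hK : (g : G ⧸ K) = h) : g = h := by
  have hmem : g⁻¹ * h ∈ H ⊓ K := ⟨QuotientGroup.eq.mp hH, QuotientGroup.eq.mp hK⟩
  rw [hHK, Subgroup.mem_bot, inv_mul_eq_one] at hmem
  exact hmem

theorem mem_of_mk_eq_mk_mul_inv {H : Subgroup G} {g x : G}
    (h : (g : G ⧸ H) = ((g * x⁻¹ : G) : G ⧸ H)) : x ∈ H := by
  have hmem : x⁻¹ ∈ H := by simpa using QuotientGroup.eq.mp h
  exact inv_mem_iff.mp hmem

end QuotientGroup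

theorem group_trade_disjoint_general {G : Type*} [Group G] (a b c : G)
    (ha : a ≠ 1)
    (hAB : Subgroup.zpowers a ⊓ Subgroup.zpowers b = ⊥)
    (hAC : Subgroup.zpowers a ⊓ Subgroup.zpowers c = ⊥) :
    ∀ g h : G,
      ((g : G ⧸ Subgroup.zpowers a), (g : G ⧸ Subgroup.zpowers b),
        (g : G ⧸ Subgroup.zpowers c)) ≠
      ((h : G ⧸ Subgroup.zpowers a), (h : G ⧸ Subgroup.zpowers b),
        ((h * a⁻¹ : G) : G ⧸ Subgroup.zpowers c)) := by
  rintro g h heq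
  simp only [Prod.mk.injEq] at heq
  obtain ⟨hA, hB, hC⟩ := heq
  obtain rfl : g = h := QuotientGroup.eq_of_mk_eq_of_inf_eq_bot hAB hA hB
  have ha_mem : a ∈ Subgroup.zpowers a ⊓ Subgroup.zpowers c :=
    ⟨Subgroup.mem_zpowers a, QuotientGroup.mem_of_mk_eq_mk_mul_inv hC⟩
  rw [hAC, Subgroup.mem_bot] at ha_mem
  exact ha ha_mem

/-- The group-based trade T∘ = {(gA,gB,gC)} and its mate
T⋆ = {(gA,gB,ga⁻¹C)} are disjoint. -/
theorem group_trade_disjoint {G : Type*} [Group G] [Finite G] (a b c : G)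
    (ha : a ≠ 1) (hb : b ≠ 1) (hc : c ≠ 1) (habc : a * b * c = 1)
    (hAB : Subgroup.zpowers a ⊓ Subgroup.zpowers b = ⊥)
    (hAC : Subgroup.zpowers a ⊓ Subgroup.zpowers c = ⊥)
    (hBC : Subgroup.zpowers b ⊓ Subgroup.zpowers c = ⊥) :
    ∀ g h : G,
      ((g : G ⧸ Subgroup.zpowers a), (g : G ⧸ Subgroup.zpowers b),
        (g : G ⧸ Subgroup.zpowers c)) ≠
      ((h : G ⧸ Subgroup.zpowers a), (h : G ⧸ Subgroup.zpowers b),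
        ((h * a⁻¹ : G) : G ⧸ Subgroup.zpowers c)) :=
  group_trade_disjoint_general a b c ha hAB hAC
end

section
/- Let G be a finite group and a, b, c non-identity elements with abc = 1 whose generated cyclic subgroups A, B, C pairwise intersect trivially. Then the pair (T∘, T⋆) with T∘ = {(gA, gB, gC) : g ∈ G} and T⋆ = {(gA, gB, g a⁻¹ C) : g ∈ G} is a latin bitrade: they are disjoint, each is a partial latin square, and for every triple of one and every pair of coordinates r ≠ s there is a unique triple of the other agreeing exactly in coordinates r and s. -/
/-!
Since `A ⊓ B = ⊥`, the map `g ↦ (gA, gB)` is injective, and likewise for the other two pairs of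
coordinates; hence `T∘` is a partial latin square. For `T⋆`, use `a⁻¹ = bc`: the pair
`(gA, ga⁻¹C)` is `(hA, hC)` for `h = ga⁻¹`, and `(gB, ga⁻¹C)` is `(hB, hC)` for `h = gb`, so `T⋆`
is one as well. The partners are explicit: `(gA, gB, gC)` agrees with the triples of `T⋆`
indexed by `g`, `ga` and `gb⁻¹`, and `(gA, gB, ga⁻¹C)` with those of `T∘` indexed by `g`, `ga⁻¹`
and `gb`; their uniqueness is then forced by the partial latin square property. The two sets are
disjoint because `gC = ga⁻¹C` would put `a` in `A ⊓ C`.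
-/

/-- A partial latin square: any two triples agreeing in two of the three
coordinates are equal. -/
def IsPLS {A1 A2 A3 : Type*} (T : Set (A1 × A2 × A3)) : Prop :=
  ∀ ⦃t⦄, t ∈ T → ∀ ⦃t'⦄, t' ∈ T →
    ((t.1 = t'.1 ∧ t.2.1 = t'.2.1) → t = t') ∧
    ((t.1 = t'.1 ∧ t.2.2 = t'.2.2) → t = t') ∧
    ((t.2.1 = t'.2.1 ∧ t.2.2 = t'.2.2) → t = t')

/-- A latin bitrade: two disjoint partial latin squares such that for every
triple of one and every pair of coordinates there is a unique triple of the
other agreeing in those two coordinates. -/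
def IsBitrade {A1 A2 A3 : Type*} (T U : Set (A1 × A2 × A3)) : Prop :=
  IsPLS T ∧ IsPLS U ∧ Disjoint T U ∧
  (∀ ⦃t⦄, t ∈ T →
    (∃! u, u ∈ U ∧ u.1 = t.1 ∧ u.2.1 = t.2.1) ∧
    (∃! u, u ∈ U ∧ u.1 = t.1 ∧ u.2.2 = t.2.2) ∧
    (∃! u, u ∈ U ∧ u.2.1 = t.2.1 ∧ u.2.2 = t.2.2)) ∧
  (∀ ⦃u⦄, u ∈ U →
    (∃! t, t ∈ T ∧ t.1 = u.1 ∧ t.2.1 = u.2.1) ∧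
    (∃! t, t ∈ T ∧ t.1 = u.1 ∧ t.2.2 = u.2.2) ∧
    (∃! t, t ∈ T ∧ t.2.1 = u.2.1 ∧ t.2.2 = u.2.2))

/-- `e : U ≃ T` is the map `β₁`: it changes the first (row) coordinate and
preserves the other two. -/
def IsBeta1 {A1 A2 A3 : Type*} (T U : Set (A1 × A2 × A3)) (e : U ≃ T) : Prop :=
  ∀ u : U, ((e u : A1 × A2 × A3).1 ≠ (u : A1 × A2 × A3).1) ∧
    ((e u : A1 × A2 × A3).2.1 = (u : A1 × A2 × A3).2.1) ∧
    ((e u : A1 × A2 × A3).2.2 = (u : A1 × A2 × A3).2.2)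

/-- `e : U ≃ T` is the map `β₂`: it changes the second (column) coordinate and
preserves the other two. -/
def IsBeta2 {A1 A2 A3 : Type*} (T U : Set (A1 × A2 × A3)) (e : U ≃ T) : Prop :=
  ∀ u : U, ((e u : A1 × A2 × A3).1 = (u : A1 × A2 × A3).1) ∧
    ((e u : A1 × A2 × A3).2.1 ≠ (u : A1 × A2 × A3).2.1) ∧
    ((e u : A1 × A2 × A3).2.2 = (u : A1 × A2 × A3).2.2)

/-- `e : U ≃ T` is the map `β₃`: it changes the third (symbol) coordinate and
preserves the other two. -/
def IsBeta3 {A1 A2 A3 : Type*} (T U : Set (A1 × A2 × A3)) (e : U ≃ T) : Prop :=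
  ∀ u : U, ((e u : A1 × A2 × A3).1 = (u : A1 × A2 × A3).1) ∧
    ((e u : A1 × A2 × A3).2.1 = (u : A1 × A2 × A3).2.1) ∧
    ((e u : A1 × A2 × A3).2.2 ≠ (u : A1 × A2 × A3).2.2)

open Function

section LatinBitrade

variable {A1 A2 A3 : Type*}

theorem isPLS_range {ι : Type*} (f : ι → A1 × A2 × A3)
    (h12 : Injective fun i => ((f i).1, (f i).2.1))
    (h13 : Injective fun i => ((f i).1, (f i).2.2))
    (h23 : Injective fun i => ((f i).2.1, (f i).2.2)) :
    IsPLS (Set.range f) := by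
  rintro _ ⟨i, rfl⟩ _ ⟨j, rfl⟩
  exact ⟨fun h => congrArg f (h12 (Prod.ext h.1 h.2)),
    fun h => congrArg f (h13 (Prod.ext h.1 h.2)),
    fun h => congrArg f (h23 (Prod.ext h.1 h.2))⟩

def HasPartnersIn (T U : Set (A1 × A2 × A3)) : Prop :=
  ∀ ⦃t⦄, t ∈ T →
    (∃ u ∈ U, u.1 = t.1 ∧ u.2.1 = t.2.1) ∧
    (∃ u ∈ U, u.1 = t.1 ∧ u.2.2 = t.2.2) ∧
    (∃ u ∈ U, u.2.1 = t.2.1 ∧ u.2.2 = t.2.2)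

namespace IsPLS

variable {U : Set (A1 × A2 × A3)}

theorem existsUnique_row_col (hU : IsPLS U) {x : A1} {y : A2}
    (h : ∃ u ∈ U, u.1 = x ∧ u.2.1 = y) :
    ∃! u, u ∈ U ∧ u.1 = x ∧ u.2.1 = y :=
  existsUnique_of_exists_of_unique h fun _ _ ⟨hu, h1, h2⟩ ⟨hu', h1', h2'⟩ =>
    (hU hu hu').1 ⟨h1.trans h1'.symm, h2.trans h2'.symm⟩

theorem existsUnique_row_symbol (hU : IsPLS U) {x : A1} {z : A3}
    (h : ∃ u ∈ U, u.1 = x ∧ u.2.2 = z) :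
    ∃! u, u ∈ U ∧ u.1 = x ∧ u.2.2 = z :=
  existsUnique_of_exists_of_unique h fun _ _ ⟨hu, h1, h2⟩ ⟨hu', h1', h2'⟩ =>
    (hU hu hu').2.1 ⟨h1.trans h1'.symm, h2.trans h2'.symm⟩

theorem existsUnique_col_symbol (hU : IsPLS U) {y : A2} {z : A3}
    (h : ∃ u ∈ U, u.2.1 = y ∧ u.2.2 = z) :
    ∃! u, u ∈ U ∧ u.2.1 = y ∧ u.2.2 = z :=
  existsUnique_of_exists_of_unique h fun _ _ ⟨hu, h1, h2⟩ ⟨hu', h1', h2'⟩ =>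
    (hU hu hu').2.2 ⟨h1.trans h1'.symm, h2.trans h2'.symm⟩

end IsPLS

theorem isBitrade_of_hasPartnersIn {T U : Set (A1 × A2 × A3)} (hT : IsPLS T) (hU : IsPLS U)
    (hdisj : Disjoint T U) (hTU : HasPartnersIn T U) (hUT : HasPartnersIn U T) :
    IsBitrade T U := by
  refine ⟨hT, hU, hdisj, fun t ht => ?_, fun u hu => ?_⟩
  · obtain ⟨h12, h13, h23⟩ := hTU ht
    exact ⟨hU.existsUnique_row_col h12, hU.existsUnique_row_symbol h13,
      hU.existsUnique_col_symbol h23⟩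
  · obtain ⟨h12, h13, h23⟩ := hUT hu
    exact ⟨hT.existsUnique_row_col h12, hT.existsUnique_row_symbol h13,
      hT.existsUnique_col_symbol h23⟩

end LatinBitrade

section GroupTrade

variable {G : Type*} [Group G]

theorem injective_mk_prod_mk {H K : Subgroup G} (h : H ⊓ K = ⊥) :
    Injective fun g : G => ((g : G ⧸ H), (g : G ⧸ K)) := by
  intro g g' e
  obtain ⟨eH, eK⟩ := Prod.ext_iff.mp e
  have hmem : g⁻¹ * g' ∈ H ⊓ K := ⟨QuotientGroup.eq.mp eH, QuotientGroup.eq.mp eK⟩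
  rw [h, Subgroup.mem_bot] at hmem
  exact inv_mul_eq_one.mp hmem

variable (A B C : Subgroup G)

def cosetTriple (g : G) : (G ⧸ A) × (G ⧸ B) × (G ⧸ C) := (g, g, g)

def shiftedCosetTriple (x g : G) : (G ⧸ A) × (G ⧸ B) × (G ⧸ C) := (g, g, (g * x : G))

variable {A B C} {a b c : G}

theorem mk_mul_inv_eq_mk_mul (habc : a * b * c = 1) (hc : c ∈ C) (g : G) :
    ((g * a⁻¹ : G) : G ⧸ C) = ((g * b : G) : G ⧸ C) := by
  rw [inv_eq_of_mul_eq_one_right ((mul_assoc a b c).symm.trans habc), ← mul_assoc,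
    QuotientGroup.mk_mul_of_mem _ hc]

theorem isPLS_range_cosetTriple (hAB : A ⊓ B = ⊥) (hAC : A ⊓ C = ⊥) (hBC : B ⊓ C = ⊥) :
    IsPLS (Set.range (cosetTriple A B C)) :=
  isPLS_range _ (injective_mk_prod_mk hAB) (injective_mk_prod_mk hAC) (injective_mk_prod_mk hBC)

theorem isPLS_range_shiftedCosetTriple (ha : a ∈ A) (hb : b ∈ B) (hc : c ∈ C)
    (habc : a * b * c = 1) (hAB : A ⊓ B = ⊥) (hAC : A ⊓ C = ⊥) (hBC : B ⊓ C = ⊥) :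
    IsPLS (Set.range (shiftedCosetTriple A B C a⁻¹)) := by
  refine isPLS_range _ (injective_mk_prod_mk hAB) ?_ ?_
  · have hshift : (fun g : G => ((g : G ⧸ A), ((g * a⁻¹ : G) : G ⧸ C))) =
        (fun g : G => ((g : G ⧸ A), (g : G ⧸ C))) ∘ (· * a⁻¹) :=
      funext fun g => Prod.ext (QuotientGroup.mk_mul_of_mem g (inv_mem ha)).symm rfl
    exact hshift ▸ (injective_mk_prod_mk hAC).comp (mul_left_injective a⁻¹)
  · have hshift : (fun g : G => ((g : G ⧸ B), ((g * a⁻¹ : G) : G ⧸ C))) =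
        (fun g : G => ((g : G ⧸ B), (g : G ⧸ C))) ∘ (· * b) :=
      funext fun g => Prod.ext (QuotientGroup.mk_mul_of_mem g hb).symm
        (mk_mul_inv_eq_mk_mul habc hc g)
    exact hshift ▸ (injective_mk_prod_mk hBC).comp (mul_left_injective b)

theorem disjoint_range_cosetTriple_shiftedCosetTriple (ha : a ∈ A) (ha_ne_one : a ≠ 1)
    (hAB : A ⊓ B = ⊥) (hAC : A ⊓ C = ⊥) :
    Disjoint (Set.range (cosetTriple A B C)) (Set.range (shiftedCosetTriple A B C a⁻¹)) := by
  rw [Set.disjoint_left]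
  rintro _ ⟨g, rfl⟩ ⟨g', e⟩
  simp only [cosetTriple, shiftedCosetTriple, Prod.mk.injEq] at e
  obtain ⟨eA, eB, eC⟩ := e
  obtain rfl : g' = g := injective_mk_prod_mk hAB (Prod.ext eA eB)
  have haC : a ∈ C := by simpa using QuotientGroup.eq.mp eC
  exact ha_ne_one (Subgroup.mem_bot.mp (hAC ▸ ⟨ha, haC⟩))

theorem hasPartnersIn_cosetTriple_shiftedCosetTriple (ha : a ∈ A) (hb : b ∈ B) (hc : c ∈ C)
    (habc : a * b * c = 1) :
    HasPartnersIn (Set.range (cosetTriple A B C))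
      (Set.range (shiftedCosetTriple A B C a⁻¹)) := by
  rintro _ ⟨g, rfl⟩
  refine ⟨⟨_, ⟨g, rfl⟩, rfl, rfl⟩, ⟨_, ⟨g * a, rfl⟩, ?_, ?_⟩, ⟨_, ⟨g * b⁻¹, rfl⟩, ?_, ?_⟩⟩
  · exact QuotientGroup.mk_mul_of_mem g ha
  · exact congrArg QuotientGroup.mk (mul_inv_cancel_right g a)
  · exact QuotientGroup.mk_mul_of_mem g (inv_mem hb)
  · show ((g * b⁻¹ * a⁻¹ : G) : G ⧸ C) = g
    rw [mk_mul_inv_eq_mk_mul habc hc, inv_mul_cancel_right]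

theorem hasPartnersIn_shiftedCosetTriple_cosetTriple (ha : a ∈ A) (hb : b ∈ B) (hc : c ∈ C)
    (habc : a * b * c = 1) :
    HasPartnersIn (Set.range (shiftedCosetTriple A B C a⁻¹))
      (Set.range (cosetTriple A B C)) := by
  rintro _ ⟨g, rfl⟩
  refine ⟨⟨_, ⟨g, rfl⟩, rfl, rfl⟩, ⟨_, ⟨g * a⁻¹, rfl⟩, ?_, rfl⟩, ⟨_, ⟨g * b, rfl⟩, ?_, ?_⟩⟩
  · exact QuotientGroup.mk_mul_of_mem g (inv_mem ha)
  · exact QuotientGroup.mk_mul_of_mem g hb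
  · exact (mk_mul_inv_eq_mk_mul habc hc g).symm

theorem isBitrade_cosetTriple_shiftedCosetTriple (ha : a ∈ A) (hb : b ∈ B) (hc : c ∈ C)
    (ha_ne_one : a ≠ 1) (habc : a * b * c = 1) (hAB : A ⊓ B = ⊥) (hAC : A ⊓ C = ⊥)
    (hBC : B ⊓ C = ⊥) :
    IsBitrade (Set.range (cosetTriple A B C)) (Set.range (shiftedCosetTriple A B C a⁻¹)) :=
  isBitrade_of_hasPartnersIn (isPLS_range_cosetTriple hAB hAC hBC)
    (isPLS_range_shiftedCosetTriple ha hb hc habc hAB hAC hBC)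
    (disjoint_range_cosetTriple_shiftedCosetTriple ha ha_ne_one hAB hAC)
    (hasPartnersIn_cosetTriple_shiftedCosetTriple ha hb hc habc)
    (hasPartnersIn_shiftedCosetTriple_cosetTriple ha hb hc habc)

end GroupTrade

theorem group_trade_is_bitrade_general {G : Type*} [Group G] (a b c : G)
    (ha : a ≠ 1) (habc : a * b * c = 1)
    (hAB : Subgroup.zpowers a ⊓ Subgroup.zpowers b = ⊥)
    (hAC : Subgroup.zpowers a ⊓ Subgroup.zpowers c = ⊥)
    (hBC : Subgroup.zpowers b ⊓ Subgroup.zpowers c = ⊥) :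
    IsBitrade
      (Set.range fun g : G => ((g : G ⧸ Subgroup.zpowers a),
        (g : G ⧸ Subgroup.zpowers b), (g : G ⧸ Subgroup.zpowers c)))
      (Set.range fun g : G => ((g : G ⧸ Subgroup.zpowers a),
        (g : G ⧸ Subgroup.zpowers b),
        ((g * a⁻¹ : G) : G ⧸ Subgroup.zpowers c))) :=
  isBitrade_cosetTriple_shiftedCosetTriple (Subgroup.mem_zpowers a) (Subgroup.mem_zpowers b)
    (Subgroup.mem_zpowers c) ha habc hAB hAC hBC

/-- (Drápal) The pair (T∘, T⋆) with T∘ = {(gA,gB,gC) : g ∈ G} and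
T⋆ = {(gA,gB,ga⁻¹C) : g ∈ G} is a latin bitrade. -/
theorem group_trade_is_bitrade {G : Type*} [Group G] [Finite G] (a b c : G)
    (ha : a ≠ 1) (hb : b ≠ 1) (hc : c ≠ 1) (habc : a * b * c = 1)
    (hAB : Subgroup.zpowers a ⊓ Subgroup.zpowers b = ⊥)
    (hAC : Subgroup.zpowers a ⊓ Subgroup.zpowers c = ⊥)
    (hBC : Subgroup.zpowers b ⊓ Subgroup.zpowers c = ⊥) :
    IsBitrade
      (Set.range fun g : G => ((g : G ⧸ Subgroup.zpowers a),
        (g : G ⧸ Subgroup.zpowers b), (g : G ⧸ Subgroup.zpowers c)))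
      (Set.range fun g : G => ((g : G ⧸ Subgroup.zpowers a),
        (g : G ⧸ Subgroup.zpowers b),
        ((g * a⁻¹ : G) : G ⧸ Subgroup.zpowers c))) :=
  group_trade_is_bitrade_general a b c ha habc hAB hAC hBC
end

section
/- Let (T∘, T⋆) be a latin bitrade and suppose (α1, α2, α3) is a triple of permutations that is an autotopism of T∘, i.e. maps T∘ to itself. If T∘ is thin (whenever distinct cells (i,j), (i',j') with i ≠ i', j ≠ j' satisfy i∘j = i'∘j', then i⋆j' is undefined or equals i∘j), then the disjoint mate T⋆ is uniquely determined by T∘: if (T∘, T⋆) and (T∘, T⋆') are both latin bitrades with T∘ thin, then T⋆ = T⋆'. -/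
/-- T∘ is thin (relative to the mate U): if two cells in distinct rows and
columns hold the same symbol of T∘, then the "opposite corner" cell either
holds no symbol of U or holds that same symbol. -/
def IsThin {A1 A2 A3 : Type*} (T U : Set (A1 × A2 × A3)) : Prop :=
  ∀ i j k i' j', (i, j, k) ∈ T → (i', j', k) ∈ T → i ≠ i' → j ≠ j' →
    ∀ k', (i, j', k') ∈ U → k' = k

/-!
Every triple `(i, j', k')` of a mate `U'` of `T` is flanked in `T` by `(i, j, k')` in its row and
`(i', j', k')` in its column, with `i ≠ i'` and `j ≠ j'` because `T` and `U'` are disjoint. The cell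
`(i, j')` is occupied in `T`, hence in `U`, and thinness forces its `U`-symbol to be `k'`. So
`U' ⊆ U`; as both mates occupy exactly the cells of `T` and `U` is a partial latin square,
the inclusion is an equality.
-/

namespace IsBitrade

variable {A1 A2 A3 : Type*} {T U U' : Set (A1 × A2 × A3)} {i : A1} {j : A2} {k : A3}

theorem exists_mem_right_of_mem_left (h : IsBitrade T U) (ht : (i, j, k) ∈ T) :
    ∃ k', (i, j, k') ∈ U := by
  obtain ⟨⟨_, _, k'⟩, hu, rfl, rfl⟩ := (h.2.2.2.1 ht).1.exists
  exact ⟨k', hu⟩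

theorem exists_mem_left_of_mem_right (h : IsBitrade T U) (hu : (i, j, k) ∈ U) :
    ∃ k', (i, j, k') ∈ T := by
  obtain ⟨⟨_, _, k'⟩, ht, rfl, rfl⟩ := (h.2.2.2.2 hu).1.exists
  exact ⟨k', ht⟩

theorem exists_ne_mem_left_of_mem_right_row (h : IsBitrade T U) (hu : (i, j, k) ∈ U) :
    ∃ j', j' ≠ j ∧ (i, j', k) ∈ T := by
  obtain ⟨⟨_, j', _⟩, ht, rfl, rfl⟩ := (h.2.2.2.2 hu).2.1.exists
  refine ⟨j', ?_, ht⟩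
  rintro rfl
  exact Set.disjoint_left.mp h.2.2.1 ht hu

theorem exists_ne_mem_left_of_mem_right_col (h : IsBitrade T U) (hu : (i, j, k) ∈ U) :
    ∃ i', i' ≠ i ∧ (i', j, k) ∈ T := by
  obtain ⟨⟨i', _, _⟩, ht, rfl, rfl⟩ := (h.2.2.2.2 hu).2.2.exists
  refine ⟨i', ?_, ht⟩
  rintro rfl
  exact Set.disjoint_left.mp h.2.2.1 ht hu

theorem subset_of_isThin (h : IsBitrade T U) (hthin : IsThin T U) (h' : IsBitrade T U') :
    U' ⊆ U := by
  rintro ⟨i, j, k⟩ hu'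
  obtain ⟨j₀, hj₀, hrow⟩ := h'.exists_ne_mem_left_of_mem_right_row hu'
  obtain ⟨i₀, hi₀, hcol⟩ := h'.exists_ne_mem_left_of_mem_right_col hu'
  obtain ⟨_, hcell⟩ := h'.exists_mem_left_of_mem_right hu'
  obtain ⟨k'', hu⟩ := h.exists_mem_right_of_mem_left hcell
  obtain rfl := hthin i j₀ k i₀ j hrow hcol hi₀.symm hj₀ k'' hu
  exact hu

theorem eq_of_subset (h : IsBitrade T U) (h' : IsBitrade T U') (hsub : U' ⊆ U) : U = U' := by
  refine hsub.antisymm' fun ⟨i, j, k⟩ hu => ?_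
  obtain ⟨_, ht⟩ := h.exists_mem_left_of_mem_right hu
  obtain ⟨k', hu'⟩ := h'.exists_mem_right_of_mem_left ht
  rwa [(h.2.1 hu (hsub hu')).1 ⟨rfl, rfl⟩]

end IsBitrade

/-- If (T∘, T⋆) is a thin latin bitrade then the disjoint mate of T∘ is
unique: any other latin bitrade (T∘, T⋆') has T⋆' = T⋆. -/
theorem thin_unique_mate {A1 A2 A3 : Type*} (T U U' : Set (A1 × A2 × A3))
    (h : IsBitrade T U) (hthin : IsThin T U) (h' : IsBitrade T U') :
    U = U' :=
  h.eq_of_subset h' (h.subset_of_isThin hthin h')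
end

section
/- Let (T∘, T⋆) be a latin bitrade with associated fixed-point-free permutations τ1, τ2, τ3 of T∘ satisfying τ1τ2τ3 = id. For distinct r, s ∈ {1,2,3}, any cycle (orbit of ⟨τ_r⟩) ρ of τ_r and any cycle μ of τ_s share at most one point: |mov(ρ) ∩ mov(μ)| ≤ 1, where mov denotes the underlying point set of the cycle. -/
/-!
Since `β₂` and `β₃` both preserve the row, `τ₁ = β₂⁻¹β₃` preserves the row, so every cycle of `τ₁`
lies in a single row; likewise cycles of `τ₂` lie in a single column and cycles of `τ₃` in a single
symbol. Two points on cycles of two different `τ`s thus share two coordinates, and in the partial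
latin square `T∘` two such triples coincide.
-/

theorem Equiv.Perm.apply_zpow_apply_eq_of_invariant {α β : Type*} {σ : Equiv.Perm α} {f : α → β}
    (hf : ∀ x, f (σ x) = f x) (n : ℤ) (x : α) : f ((σ ^ n) x) = f x := by
  induction n using Int.induction_on generalizing x with
  | zero => rfl
  | succ n ih => rw [zpow_add_one, Equiv.Perm.mul_apply, ih, hf]
  | pred n ih =>
    rw [zpow_sub_one, Equiv.Perm.mul_apply, ih, ← hf (σ⁻¹ x), Equiv.Perm.coe_inv,
      Equiv.apply_symm_apply]

theorem MulAction.apply_eq_of_mem_orbit_zpowers {α β : Type*} {σ : Equiv.Perm α} {f : α → β}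
    (hf : ∀ x, f (σ x) = f x) {x a : α} (ha : a ∈ MulAction.orbit (Subgroup.zpowers σ) x) :
    f a = f x := by
  obtain ⟨⟨_, n, rfl⟩, rfl⟩ := ha
  exact Equiv.Perm.apply_zpow_apply_eq_of_invariant hf n x

theorem MulAction.orbit_zpowers_inter_subsingleton {α β γ : Type*} {σ π : Equiv.Perm α}
    {f : α → β} {g : α → γ} (hf : ∀ x, f (σ x) = f x) (hg : ∀ x, g (π x) = g x)
    (hfg : Function.Injective fun a => (f a, g a)) (x y : α) :
    (MulAction.orbit (Subgroup.zpowers σ) x ∩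
      MulAction.orbit (Subgroup.zpowers π) y).Subsingleton := by
  rintro a ⟨haσ, haπ⟩ b ⟨hbσ, hbπ⟩
  exact hfg (Prod.ext
    ((apply_eq_of_mem_orbit_zpowers hf haσ).trans (apply_eq_of_mem_orbit_zpowers hf hbσ).symm)
    ((apply_eq_of_mem_orbit_zpowers hg haπ).trans (apply_eq_of_mem_orbit_zpowers hg hbπ).symm))

theorem Equiv.apply_symm_trans_apply_eq {X Y γ : Type*} {e e' : X ≃ Y} {f : X → γ} {g : Y → γ}
    (he : ∀ u, g (e u) = f u) (he' : ∀ u, g (e' u) = f u) (y : Y) :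
    g ((e.symm.trans e') y) = g y := by
  rw [Equiv.trans_apply, he', ← he, Equiv.apply_symm_apply]

namespace IsPLS

variable {A1 A2 A3 : Type*} {T : Set (A1 × A2 × A3)}

theorem injective_row_col (hT : IsPLS T) :
    Function.Injective fun t : T => ((t : A1 × A2 × A3).1, (t : A1 × A2 × A3).2.1) :=
  fun a b hab => Subtype.ext ((hT a.2 b.2).1 (Prod.ext_iff.mp hab))

theorem injective_row_symbol (hT : IsPLS T) :
    Function.Injective fun t : T => ((t : A1 × A2 × A3).1, (t : A1 × A2 × A3).2.2) :=
  fun a b hab => Subtype.ext ((hT a.2 b.2).2.1 (Prod.ext_iff.mp hab))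

theorem injective_col_symbol (hT : IsPLS T) :
    Function.Injective fun t : T => ((t : A1 × A2 × A3).2.1, (t : A1 × A2 × A3).2.2) :=
  fun a b hab => Subtype.ext ((hT a.2 b.2).2.2 (Prod.ext_iff.mp hab))

end IsPLS

/-- (Q1): a cycle of τ_r and a cycle of τ_s (r ≠ s) meet in at most one
point. Cycles are the orbits of the cyclic groups generated by the τᵢ. -/
theorem cycles_meet_in_at_most_one_point {A1 A2 A3 : Type*}
    (T U : Set (A1 × A2 × A3))
    (h : IsBitrade T U) (e1 e2 e3 : U ≃ T)
    (h1 : IsBeta1 T U e1) (h2 : IsBeta2 T U e2) (h3 : IsBeta3 T U e3) :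
    let τ1 : Equiv.Perm T := e2.symm.trans e3
    let τ2 : Equiv.Perm T := e3.symm.trans e1
    let τ3 : Equiv.Perm T := e1.symm.trans e2
    (∀ x y : T, (MulAction.orbit (Subgroup.zpowers τ1) x ∩
        MulAction.orbit (Subgroup.zpowers τ2) y).Subsingleton) ∧
    (∀ x y : T, (MulAction.orbit (Subgroup.zpowers τ1) x ∩
        MulAction.orbit (Subgroup.zpowers τ3) y).Subsingleton) ∧
    (∀ x y : T, (MulAction.orbit (Subgroup.zpowers τ2) x ∩
        MulAction.orbit (Subgroup.zpowers τ3) y).Subsingleton) := by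
  intro τ1 τ2 τ3
  have τ1_row : ∀ x, (τ1 x : A1 × A2 × A3).1 = (x : A1 × A2 × A3).1 :=
    Equiv.apply_symm_trans_apply_eq (f := fun u : U => (u : A1 × A2 × A3).1)
      (g := fun t : T => (t : A1 × A2 × A3).1)
      (fun u => (h2 u).1) (fun u => (h3 u).1)
  have τ2_col : ∀ x, (τ2 x : A1 × A2 × A3).2.1 = (x : A1 × A2 × A3).2.1 :=
    Equiv.apply_symm_trans_apply_eq (f := fun u : U => (u : A1 × A2 × A3).2.1)
      (g := fun t : T => (t : A1 × A2 × A3).2.1)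
      (fun u => (h3 u).2.1) (fun u => (h1 u).2.1)
  have τ3_symbol : ∀ x, (τ3 x : A1 × A2 × A3).2.2 = (x : A1 × A2 × A3).2.2 :=
    Equiv.apply_symm_trans_apply_eq (f := fun u : U => (u : A1 × A2 × A3).2.2)
      (g := fun t : T => (t : A1 × A2 × A3).2.2)
      (fun u => (h1 u).2.2) (fun u => (h2 u).2.2)
  exact ⟨MulAction.orbit_zpowers_inter_subsingleton τ1_row τ2_col h.1.injective_row_col,
    MulAction.orbit_zpowers_inter_subsingleton τ1_row τ3_symbol h.1.injective_row_symbol,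
    MulAction.orbit_zpowers_inter_subsingleton τ2_col τ3_symbol h.1.injective_col_symbol⟩
end
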